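/- Let n and d be natural numbers with d ≥ 1 such that iterLog d n ≤ 16 and iterLog j n > 16 for every j < d. Then Σ_{j=1}^{d−1} (1 : ℝ) / (iterLog j n) < 1/8. -/

import Mathlib

/-- The iterated base-2 logarithm: `iterLog 0 n = n`, `iterLog (d+1) n = log₂ (iterLog d n)`. -/
def iterLog : ℕ → ℕ → ℕ
  | 0, n => n
  | d + 1, n => Nat.log 2 (iterLog d n)

/-! Each application of `Nat.log 2` at least halves its argument, so the iterated logarithms
below the last level that exceeds `16` grow at least geometrically going down:
`iterLog j n ≥ 17 · 2 ^ (d - 1 - j)`. The sum of their reciprocals is therefore dominated by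
a geometric series of total mass `2 / 17 < 1 / 8`. -/

open Finset

theorem Nat.two_mul_le_two_pow (k : ℕ) : 2 * k ≤ 2 ^ k := by
  cases k with
  | zero => simp
  | succ k =>
    have := Nat.lt_two_pow_self (n := k)
    rw [pow_succ]
    omega

theorem Nat.two_mul_log_two_le (m : ℕ) : 2 * Nat.log 2 m ≤ m := by
  rcases Nat.eq_zero_or_pos m with rfl | hm
  · simp
  · exact (Nat.two_mul_le_two_pow _).trans (Nat.pow_log_le_self 2 hm.ne')

theorem two_pow_mul_iterLog_add_le (n j k : ℕ) :
    2 ^ k * iterLog (j + k) n ≤ iterLog j n := by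
  induction k with
  | zero => simp
  | succ k ih =>
    calc 2 ^ (k + 1) * iterLog (j + (k + 1)) n
        = 2 ^ k * (2 * Nat.log 2 (iterLog (j + k) n)) := by rw [pow_succ, mul_assoc]; rfl
      _ ≤ 2 ^ k * iterLog (j + k) n := Nat.mul_le_mul_left _ (Nat.two_mul_log_two_le _)
      _ ≤ iterLog j n := ih

theorem two_pow_mul_succ_le_iterLog {n d c j : ℕ} (hlast : c < iterLog (d - 1) n) (hj : j < d) :
    2 ^ (d - 1 - j) * (c + 1) ≤ iterLog j n := by
  have hle := two_pow_mul_iterLog_add_le n j (d - 1 - j)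
  rw [show j + (d - 1 - j) = d - 1 by omega] at hle
  exact (Nat.mul_le_mul_left _ hlast).trans hle

theorem stmt_12_general (n d : ℕ)
    (h2 : ∀ j < d, 16 < iterLog j n) :
    ∑ j ∈ Finset.Ico 1 d, (1 : ℝ) / (iterLog j n : ℝ) < 1 / 8 := by
  have hterm : ∀ j ∈ range d, (1 : ℝ) / iterLog j n ≤ (1 / 2) ^ (d - 1 - j) / 17 := by
    intro j hj
    have hj : j < d := mem_range.mp hj
    have hreal : (2 : ℝ) ^ (d - 1 - j) * 17 ≤ iterLog j n := by
      exact_mod_cast two_pow_mul_succ_le_iterLog (h2 (d - 1) (by omega)) hj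
    have hpos : (0 : ℝ) < iterLog j n := (by positivity : (0 : ℝ) < _).trans_le hreal
    rwa [one_div_pow, div_div, one_div_le_one_div hpos (by positivity)]
  calc ∑ j ∈ Ico 1 d, (1 : ℝ) / iterLog j n
      ≤ ∑ j ∈ range d, (1 : ℝ) / iterLog j n :=
        sum_le_sum_of_subset_of_nonneg (fun j => by simp only [mem_Ico, mem_range]; omega)
          (fun _ _ _ => by positivity)
    _ ≤ ∑ j ∈ range d, (1 / 2 : ℝ) ^ (d - 1 - j) / 17 := sum_le_sum hterm
    _ = (∑ j ∈ range d, (1 / 2 : ℝ) ^ j) / 17 := by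
        rw [← sum_div, sum_range_reflect (fun j => (1 / 2 : ℝ) ^ j)]
    _ ≤ 2 / 17 := by gcongr; exact sum_geometric_two_le d
    _ < 1 / 8 := by norm_num

/-- Union bound for the soundness of the ⟂iterated protocol: if `d ≥ 1` is the first level at
which the iterated logarithm drops to at most `16`, then `Σ_{j=1}^{d−1} 1/(iterLog j n) < 1/8`. -/
theorem stmt_12 (n d : ℕ) (hd : 1 ≤ d) (h1 : iterLog d n ≤ 16)
    (h2 : ∀ j < d, 16 < iterLog j n) :
    ∑ j ∈ Finset.Ico 1 d, (1 : ℝ) / (iterLog j n : ℝ) < 1 / 8 :=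
  stmt_12_general n d h2
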